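/- Let $A$, $B$, $P$ be vector spaces over a field $F$ and let $\rho \colon A \to B \otimes P^*$ be a linear map, written $\rho(a) = a_{(0)} \otimes a_{(1)}$. Define $\psi \colon P \otimes A \to B$ by $\psi(p \otimes a) = a_{(1)}(p)\,a_{(0)}$. Then $\cosupp\rho$ equals the closure of $\cosupp\psi$ in the finite topology on $\mathrm{Hom}_F(A,B)$, where $\cosupp\psi = \{\psi(p\otimes -) \mid p \in P\}$ and $\cosupp\rho = \{(\mathrm{id}_B\otimes q^{**})\circ\rho \mid q^{**} \in P^{**}\}$. -/

import Mathlib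

open TensorProduct

variable {F : Type*} [Field F] {A : Type uA} {B : Type uB} [AddCommGroup A] [Module F A]
  [AddCommGroup B] [Module F B]

/-- The linear map `Q^* → Hom(A,B)` sending `q^*` to `(id_B ⊗ q^*) ∘ ρ`. -/
noncomputable def cosuppL {Q : Type*} [AddCommGroup Q] [Module F Q] (ρ : A →ₗ[F] B ⊗[F] Q) :
    Module.Dual F Q →ₗ[F] (A →ₗ[F] B) where
  toFun q := (TensorProduct.rid F B).toLinearMap ∘ₗ LinearMap.lTensor B q ∘ₗ ρ
  map_add' q₁ q₂ := by
    simp [LinearMap.lTensor_add, LinearMap.add_comp, LinearMap.comp_add]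
  map_smul' c q := by
    simp [LinearMap.lTensor_smul, LinearMap.smul_comp, LinearMap.comp_smul]

/-- The cosupport of `ρ : A → B ⊗ Q`. -/
noncomputable def lcosupp {Q : Type*} [AddCommGroup Q] [Module F Q] (ρ : A →ₗ[F] B ⊗[F] Q) :
    Submodule F (A →ₗ[F] B) :=
  LinearMap.range (cosuppL ρ)

/-- The finite topology on `Hom_F(A,B)`: pointwise convergence with `B` discrete. -/
def finiteTopology (F A B : Type*) [Field F] [AddCommGroup A] [Module F A]
    [AddCommGroup B] [Module F B] : TopologicalSpace (A →ₗ[F] B) :=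
  TopologicalSpace.induced (fun f : A →ₗ[F] B => (f : A → B))
    (@Pi.topologicalSpace A (fun _ => B) (fun _ => ⊥))

/-!
The inclusion `cosupp ρ ⊆ closure (cosupp ψ)`: on finitely many `a ∈ A` the map
`(id ⊗ ξ) ∘ ρ` only sees `ξ ∈ P^{**}` on a finite-dimensional subspace of `P^*`, and there `ξ`
is evaluation at some `p ∈ P`.

The reverse inclusion holds because `cosupp ρ` is closed, for any `ρ : A → B ⊗ Q`. Pair
`f : A → B` with `B^* ⊗ A` by `β ⊗ a ↦ β (f a)` and contract `B^* ⊗ A → Q` by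
`β ⊗ a ↦ (β ⊗ id)(ρ a)`; the pairing of `(id ⊗ χ) ∘ ρ` is `χ` after the contraction. If `f` is a
limit of such maps, its pairing vanishes on the kernel of the contraction (each tensor involves
finitely many `a`), so it factors as `χ` after the contraction, and `f = (id ⊗ χ) ∘ ρ` since
`B^*` separates the points of `B`.
-/

open Topology LinearMap

lemma mem_closure_finiteTopology_iff {S : Set (A →ₗ[F] B)} {f : A →ₗ[F] B} :
    f ∈ closure[finiteTopology F A B] S ↔
      ∀ s : Set A, s.Finite → ∃ g ∈ S, ∀ a ∈ s, g a = f a := by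
  let _ : TopologicalSpace B := ⊥
  have : DiscreteTopology B := ⟨rfl⟩
  have hbasis : (@nhds _ (finiteTopology F A B) f).HasBasis Set.Finite
      fun s => {g | ∀ a ∈ s, g a = f a} := by
    rw [finiteTopology, nhds_induced, nhds_pi]
    simp only [nhds_discrete]
    exact (Filter.hasBasis_pi_pure _).comap _
  let _ := finiteTopology F A B
  exact mem_closure_iff_nhds_basis hbasis

theorem Module.Dual.exists_eqOn_eval {P : Type*} [AddCommGroup P] [Module F P]
    (W : Submodule F (Module.Dual F P)) [FiniteDimensional F W]
    (ξ : Module.Dual F (Module.Dual F P)) : ∃ p : P, Set.EqOn ξ (Module.Dual.eval F P p) W := by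
  obtain ⟨x, hx⟩ := (Subspace.quotDualCoannihilatorToDual_bijective W).2 (W.subtype.dualMap ξ)
  obtain ⟨p, rfl⟩ := Submodule.mkQ_surjective _ x
  exact ⟨p, fun q hq => (LinearMap.congr_fun hx ⟨q, hq⟩).symm⟩

theorem LinearMap.exists_dual_comp_eq_of_ker_le {K V W : Type*} [Field K] [AddCommGroup V]
    [Module K V] [AddCommGroup W] [Module K W] {f : V →ₗ[K] W} {g : Module.Dual K V}
    (h : ker f ≤ ker g) : ∃ χ : Module.Dual K W, χ ∘ₗ f = g := by
  have hg : g ∈ (ker f).dualAnnihilator := (Submodule.mem_dualAnnihilator _).2 h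
  rwa [← range_dualMap_eq_dualAnnihilator_ker] at hg

noncomputable def dualTensorPairing (f : A →ₗ[F] B) : Module.Dual F (Module.Dual F B ⊗[F] A) :=
  TensorProduct.lift ((llcomp F A B F).flip f)

@[simp]
lemma dualTensorPairing_tmul (f : A →ₗ[F] B) (β : Module.Dual F B) (a : A) :
    dualTensorPairing f (β ⊗ₜ a) = β (f a) := rfl

lemma dualTensorPairing_injective :
    Function.Injective
      (dualTensorPairing : (A →ₗ[F] B) → Module.Dual F (Module.Dual F B ⊗[F] A)) := by
  intro f g h
  ext a
  refine Module.eval_apply_injective F (LinearMap.ext fun β => ?_)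
  simpa using LinearMap.congr_fun h (β ⊗ₜ a)

section Cosupport

variable {Q : Type*} [AddCommGroup Q] [Module F Q]

lemma cosuppL_apply_eq_of_eqOn (ρ : A →ₗ[F] B ⊗[F] Q) {W : Submodule F Q} {a : A}
    (ha : ρ a ∈ range (W.subtype.lTensor B)) {χ χ' : Module.Dual F Q} (h : Set.EqOn χ χ' W) :
    cosuppL ρ χ a = cosuppL ρ χ' a := by
  obtain ⟨t, ht⟩ := ha
  have hW : χ ∘ₗ W.subtype = χ' ∘ₗ W.subtype := LinearMap.ext fun q => h q.2
  simp only [cosuppL, coe_mk, AddHom.coe_mk, comp_apply, LinearEquiv.coe_coe, ← ht,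
    ← lTensor_comp_apply, hW]

noncomputable def dualContract (ρ : A →ₗ[F] B ⊗[F] Q) : Module.Dual F B ⊗[F] A →ₗ[F] Q :=
  TensorProduct.lift
    { toFun β := (TensorProduct.lid F Q).toLinearMap ∘ₗ β.rTensor Q ∘ₗ ρ
      map_add' β₁ β₂ := by simp [rTensor_add, add_comp, comp_add]
      map_smul' c β := by simp [rTensor_smul, smul_comp, comp_smul] }

lemma dualTensorPairing_cosuppL (ρ : A →ₗ[F] B ⊗[F] Q) (χ : Module.Dual F Q) :
    dualTensorPairing (cosuppL ρ χ) = χ ∘ₗ dualContract ρ := by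
  refine TensorProduct.ext' fun β a => ?_
  simp only [dualTensorPairing_tmul, cosuppL, dualContract, coe_mk, AddHom.coe_mk, comp_apply,
    LinearEquiv.coe_coe, TensorProduct.lift.tmul]
  induction ρ a using TensorProduct.induction_on with
  | zero => simp
  | tmul b q => simp [mul_comm]
  | add x y hx hy => simp only [map_add, hx, hy]

lemma ker_dualContract_le_of_mem_closure (ρ : A →ₗ[F] B ⊗[F] Q) {f : A →ₗ[F] B}
    (hf : f ∈ closure[finiteTopology F A B] (lcosupp ρ : Set (A →ₗ[F] B))) :
    ker (dualContract ρ) ≤ ker (dualTensorPairing f) := by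
  intro t ht
  obtain ⟨T, rfl⟩ := TensorProduct.exists_finset t
  obtain ⟨_, ⟨χ, rfl⟩, hχ⟩ := mem_closure_finiteTopology_iff.mp hf
    (Prod.snd '' (T : Set (Module.Dual F B × A))) (T.finite_toSet.image _)
  have hfχ : dualTensorPairing f (∑ i ∈ T, i.1 ⊗ₜ i.2) =
      dualTensorPairing (cosuppL ρ χ) (∑ i ∈ T, i.1 ⊗ₜ i.2) := by
    simp only [map_sum, dualTensorPairing_tmul]
    exact Finset.sum_congr rfl fun i hi => by rw [hχ i.2 ⟨i, hi, rfl⟩]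
  rw [mem_ker, hfχ, dualTensorPairing_cosuppL, comp_apply, mem_ker.mp ht, map_zero]

theorem isClosed_lcosupp (ρ : A →ₗ[F] B ⊗[F] Q) :
    IsClosed[finiteTopology F A B] (lcosupp ρ : Set (A →ₗ[F] B)) := by
  let _ := finiteTopology F A B
  refine closure_subset_iff_isClosed.mp fun f hf => ?_
  obtain ⟨χ, hχ⟩ := exists_dual_comp_eq_of_ker_le (V := Module.Dual F B ⊗[F] A)
    (ker_dualContract_le_of_mem_closure ρ hf)
  exact ⟨χ, dualTensorPairing_injective (by rw [dualTensorPairing_cosuppL, hχ])⟩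

end Cosupport

theorem cosuppL_mem_closure_range_cosuppL_eval {P : Type*} [AddCommGroup P] [Module F P]
    (ρ : A →ₗ[F] B ⊗[F] Module.Dual F P) (ξ : Module.Dual F (Module.Dual F P)) :
    cosuppL ρ ξ ∈ closure[finiteTopology F A B]
      (Set.range fun p : P => cosuppL ρ (Module.Dual.eval F P p)) := by
  refine mem_closure_finiteTopology_iff.mpr fun s hs => ?_
  obtain ⟨W, _, hsW⟩ :=
    TensorProduct.exists_finite_submodule_right_of_setFinite (ρ '' s) (hs.image ρ)
  obtain ⟨p, hp⟩ := Module.Dual.exists_eqOn_eval W ξ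
  exact ⟨_, ⟨p, rfl⟩, fun a ha => cosuppL_apply_eq_of_eqOn ρ (hsW ⟨a, ha, rfl⟩) hp.symm⟩

/-- Let `ρ : A → B ⊗ P^*` be a linear map and let `ψ : P ⊗ A → B` be given by
`ψ(p ⊗ a) = a_{(1)}(p) a_{(0)}`, i.e. `ψ(p ⊗ -) = (id_B ⊗ ev_p) ∘ ρ`.  Then the cosupport of
`ρ` (the image of `P^{**}` under `q^{**} ↦ (id_B ⊗ q^{**}) ∘ ρ`) is the closure of the
cosupport `{ψ(p ⊗ -) | p ∈ P}` of `ψ` in the finite topology on `Hom_F(A,B)`. -/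
theorem lcosupp_eq_closure_cosupp_psi {P : Type*} [AddCommGroup P] [Module F P]
    (ρ : A →ₗ[F] B ⊗[F] Module.Dual F P) :
    ((lcosupp ρ : Submodule F (A →ₗ[F] B)) : Set (A →ₗ[F] B)) =
      @closure _ (finiteTopology F A B)
        (Set.range fun p : P => cosuppL ρ (Module.Dual.eval F P p)) := by
  let _ := finiteTopology F A B
  refine subset_antisymm ?_ (closure_minimal ?_ (isClosed_lcosupp ρ))
  · rintro _ ⟨ξ, rfl⟩
    exact cosuppL_mem_closure_range_cosuppL_eval ρ ξ
  · rintro _ ⟨p, rfl⟩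
    exact ⟨_, rfl⟩
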